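/- Let ϑ_P = (ϑ, P) be a primitive random substitution of constant length ℓ. If ϑ_P is recognisable, then for all m ∈ N the power ϑ_P^m is recognisable and its recognisability radius satisfies κ(ϑ^m) ≤ ((ℓ^m − 1)/(ℓ − 1))·κ(ϑ). -/

import Mathlib

open Filter MeasureTheory

namespace RandomSubstitutionTheory

variable {A : Type*} [Fintype A] [DecidableEq A]

/-- The set of realisations of `ϑ(u)` for a word `u`. -/
def reals (θ : A → Finset (List A)) : List A → Finset (List A)
  | [] => {[]}
  | a :: u => (θ a).biUnion fun v => (reals θ u).image fun w => v ++ w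

/-- The set of realisations of `ϑ^n(u)` for a word `u`. -/
def realsIter (θ : A → Finset (List A)) : ℕ → List A → Finset (List A)
  | 0, u => {u}
  | n + 1, u => (reals θ u).biUnion fun v => realsIter θ n v

/-- `wordProb θ P u w` is the probability `P[ϑ_P(u) = w]`, each letter of `u` being
substituted independently. -/
noncomputable def wordProb (θ : A → Finset (List A)) (P : A → List A → ℝ) :
    List A → List A → ℝ
  | [], w => if w = [] then 1 else 0
  | a :: u, w =>
      ∑ v ∈ θ a, P a v * (if v <+: w then wordProb θ P u (w.drop v.length) else 0)

/-- `iterProb θ P n u w` is the probability `P[ϑ_P^n(u) = w]` of the induced Markov chain. -/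
noncomputable def iterProb (θ : A → Finset (List A)) (P : A → List A → ℝ) :
    ℕ → List A → List A → ℝ
  | 0, u, w => if u = w then 1 else 0
  | n + 1, u, w => ∑ v ∈ reals θ u, wordProb θ P u v * iterProb θ P n v w

/-- The substitution matrix `M_{ij} = E[|ϑ_P(a_j)|_{a_i}]`. -/
noncomputable def substM (θ : A → Finset (List A)) (P : A → List A → ℝ) :
    Matrix A A ℝ :=
  Matrix.of fun i j => ∑ w ∈ θ j, P j w * (w.count i : ℝ)

/-- The defining data of a random substitution: nonempty finite sets of nonempty words
and strictly positive probability vectors. -/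
def IsRandomSubstitution (θ : A → Finset (List A)) (P : A → List A → ℝ) : Prop :=
  (∀ a, (θ a).Nonempty) ∧ (∀ a, ∀ w ∈ θ a, w ≠ []) ∧
    (∀ a, ∀ w ∈ θ a, 0 < P a w) ∧ (∀ a w, w ∉ θ a → P a w = 0) ∧
    ∀ a, ∑ w ∈ θ a, P a w = 1

/-- Primitivity of the substitution matrix: some power has strictly positive entries. -/
def IsPrimitive (θ : A → Finset (List A)) (P : A → List A → ℝ) : Prop :=
  ∃ k : ℕ, ∀ i j : A, 0 < (substM θ P ^ k) i j

/-- The Perron–Frobenius eigenvalue is `> 1` (witnessed by a positive right eigenvector). -/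
def IsExpanding (θ : A → Finset (List A)) (P : A → List A → ℝ) : Prop :=
  ∃ lam : ℝ, 1 < lam ∧ ∃ R : A → ℝ, (∀ a, 0 < R a) ∧ (substM θ P).mulVec R = lam • R

/-- A word is legal if it occurs as a subword of some level-`k` inflation word. -/
def Legal (θ : A → Finset (List A)) (u : List A) : Prop :=
  ∃ (a : A) (k : ℕ) (w : List A), w ∈ realsIter θ k [a] ∧ u <:+: w

/-- All words of length `n` over the alphabet. -/
def allWords (A : Type*) [Fintype A] [DecidableEq A] (n : ℕ) : Finset (List A) :=
  (Finset.univ : Finset (Fin n → A)).image List.ofFn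

/-- All legal words of length `n`. -/
noncomputable def legalWords (θ : A → Finset (List A)) (n : ℕ) : Finset (List A) :=
  letI := Classical.decPred (Legal θ)
  (allWords A n).filter (Legal θ)

/-- The left shift on bi-infinite sequences. -/
def shift : (ℤ → A) → ℤ → A := fun x i => x (i + 1)

/-- The finite word of length `n` read off a bi-infinite sequence starting at position `m`. -/
def window (x : ℤ → A) (m : ℤ) (n : ℕ) : List A :=
  (List.range n).map fun t => x (m + (t : ℤ))

/-- The random substitution subshift `X_ϑ`. -/
def Xtheta (θ : A → Finset (List A)) : Set (ℤ → A) :=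
  {x | ∀ (m : ℤ) (n : ℕ), Legal θ (window x m n)}

/-- The cylinder set of the word `v` at position `m`. -/
def cylinder (v : List A) (m : ℤ) : Set (ℤ → A) :=
  {x | window x m v.length = v}

/-- The number `|w|_v` of (possibly overlapping) occurrences of `v` in `w`. -/
def occCount (v w : List A) : ℕ :=
  ((List.range w.length).filter fun i => decide (v <+: w.drop i)).length

/-- Expected length `E[|ϑ_P^k(a)|]`. -/
noncomputable def expLen (θ : A → Finset (List A)) (P : A → List A → ℝ)
    (k : ℕ) (a : A) : ℝ :=
  ∑ w ∈ realsIter θ k [a], iterProb θ P k [a] w * (w.length : ℝ)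

/-- Expected number of occurrences `E[|ϑ_P^k(a)|_v]`. -/
noncomputable def expCount (θ : A → Finset (List A)) (P : A → List A → ℝ)
    (k : ℕ) (a : A) (v : List A) : ℝ :=
  ∑ w ∈ realsIter θ k [a], iterProb θ P k [a] w * (occCount v w : ℝ)

/-- `μ` is the frequency measure of `(ϑ, P)`: a shift-invariant Borel probability measure
supported on `X_ϑ` whose cylinder values are the expected word frequencies. -/
def IsFrequencyMeasure [MeasurableSpace A] (θ : A → Finset (List A))
    (P : A → List A → ℝ) (μ : Measure (ℤ → A)) : Prop :=
  IsProbabilityMeasure μ ∧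
    (∀ s : Set (ℤ → A), MeasurableSet s → μ (shift ⁻¹' s) = μ s) ∧
    μ (Xtheta θ) = 1 ∧
    ∀ v : List A, Legal θ v → ∀ (m : ℤ) (a : A),
      Tendsto (fun k : ℕ => expCount θ P k a v / expLen θ P k a) atTop
        (nhds ((μ (cylinder v m)).toReal))

/-- The `n`-th entropy sum `∑_{u ∈ L_ϑ^n} -μ[u] log μ[u]`. -/
noncomputable def entropySeq [MeasurableSpace A] (θ : A → Finset (List A))
    (μ : Measure (ℤ → A)) (n : ℕ) : ℝ :=
  ∑ u ∈ legalWords θ n, Real.negMulLog ((μ (cylinder u 0)).toReal)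

/-- The measure-theoretic (Kolmogorov–Sinai) entropy of the shift with respect to `μ`,
computed along cylinder partitions. -/
noncomputable def measEntropy [MeasurableSpace A] (θ : A → Finset (List A))
    (μ : Measure (ℤ → A)) : ℝ :=
  limsup (fun n : ℕ => entropySeq θ μ n / (n : ℝ)) atTop

/-- The topological entropy of the subshift `X_ϑ`. -/
noncomputable def topEntropy (θ : A → Finset (List A)) : ℝ :=
  limsup (fun n : ℕ => Real.log ((legalWords θ n).card) / (n : ℝ)) atTop

/-- The entropy vector `H_{k,a} = H(ϑ_P^k(a))`. -/
noncomputable def Hvec (θ : A → Finset (List A)) (P : A → List A → ℝ)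
    (k : ℕ) (a : A) : ℝ :=
  ∑ w ∈ realsIter θ k [a], Real.negMulLog (iterProb θ P k [a] w)

/-- The inner product `H_k^T R`. -/
noncomputable def HdotR (θ : A → Finset (List A)) (P : A → List A → ℝ)
    (R : A → ℝ) (k : ℕ) : ℝ :=
  ∑ a, Hvec θ P k a * R a

/-- Binary entropy `H(p) = -p log p - (1-p) log (1-p)`. -/
noncomputable def binEnt (p : ℝ) : ℝ := Real.negMulLog p + Real.negMulLog (1 - p)

/-- Unique realisation paths: concatenation of level-`k` inflation words of the letters of a
legal word is injective. -/
def UniqueRealisationPaths (θ : A → Finset (List A)) : Prop :=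
  ∀ v : List A, Legal θ v → ∀ k : ℕ, ∀ f g : Fin v.length → List A,
    (∀ i, f i ∈ realsIter θ k [v.get i]) → (∀ i, g i ∈ realsIter θ k [v.get i]) →
      (List.ofFn f).flatten = (List.ofFn g).flatten → f = g

/-- The disjoint set condition. -/
def DisjointSetCondition (θ : A → Finset (List A)) : Prop :=
  ∀ (a : A) (k : ℕ), ∀ u ∈ θ a, ∀ v ∈ θ a, u ≠ v →
    ∀ w, w ∈ realsIter θ k u → w ∉ realsIter θ k v

/-- The identical set condition. -/
def IdenticalSetCondition (θ : A → Finset (List A)) : Prop :=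
  ∀ (a : A) (k : ℕ), ∀ u ∈ θ a, ∀ v ∈ θ a, realsIter θ k u = realsIter θ k v

/-- Identical production probabilities. -/
def IdenticalProductionProbabilities (θ : A → Finset (List A))
    (P : A → List A → ℝ) : Prop :=
  ∀ a : A, ∀ u ∈ θ a, ∀ v ∈ θ a, ∀ (k : ℕ) (w : List A),
    iterProb θ P k u w = iterProb θ P k v w

/-- The disjoint set condition for the `k`-th power `ϑ^k`. -/
def DisjointSetConditionPow (θ : A → Finset (List A)) (k : ℕ) : Prop :=
  ∀ (a : A) (j : ℕ), ∀ u ∈ realsIter θ k [a], ∀ v ∈ realsIter θ k [a], u ≠ v →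
    ∀ w, w ∈ realsIter θ (k * j) u → w ∉ realsIter θ (k * j) v

/-- The identical set condition for the `k`-th power `ϑ^k`. -/
def IdenticalSetConditionPow (θ : A → Finset (List A)) (k : ℕ) : Prop :=
  ∀ (a : A) (j : ℕ), ∀ u ∈ realsIter θ k [a], ∀ v ∈ realsIter θ k [a],
    realsIter θ (k * j) u = realsIter θ (k * j) v

/-- Identical production probabilities for the `k`-th power `ϑ^k`. -/
def IdenticalProductionProbabilitiesPow (θ : A → Finset (List A))
    (P : A → List A → ℝ) (k : ℕ) : Prop :=
  ∀ a : A, ∀ u ∈ realsIter θ k [a], ∀ v ∈ realsIter θ k [a], ∀ (j : ℕ) (w : List A),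
    iterProb θ P (k * j) u w = iterProb θ P (k * j) v w

/-- Compatibility: all realisations of a letter have the same abelianisation. -/
def Compatible (θ : A → Finset (List A)) : Prop :=
  ∀ a : A, ∀ u ∈ θ a, ∀ v ∈ θ a, ∀ b : A, u.count b = v.count b

/-- Constant length `ℓ ≥ 2`. -/
def ConstantLength (θ : A → Finset (List A)) (ℓ : ℕ) : Prop :=
  2 ≤ ℓ ∧ ∀ a : A, ∀ w ∈ θ a, w.length = ℓ

/-- The set `ϑ(y)` of bi-infinite sequences obtained by substituting each letter of `y`,
with the image of `y 0` beginning at position `0`. -/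
def substSeq (θ : A → Finset (List A)) (y : ℤ → A) : Set (ℤ → A) :=
  {x | ∃ v : ℤ → List A, (∀ j, v j ∈ θ (y j)) ∧
    ∃ p : ℤ → ℤ, p 0 = 0 ∧ (∀ j, p (j + 1) = p j + (v j).length) ∧
      ∀ (j : ℤ) (t : ℕ) (ht : t < (v j).length), x (p j + (t : ℤ)) = (v j).get ⟨t, ht⟩}

/-- `ϑ(X)` for a set of bi-infinite sequences. -/
def substImage (θ : A → Finset (List A)) (X : Set (ℤ → A)) : Set (ℤ → A) :=
  ⋃ y ∈ X, substSeq θ y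

/-- The set `ϑ^m(y)` of bi-infinite sequences. -/
def substSeqPow (θ : A → Finset (List A)) : ℕ → (ℤ → A) → Set (ℤ → A)
  | 0, y => {y}
  | m + 1, y => ⋃ z ∈ substSeq θ y, substSeqPow θ m z

/-- The maximal length of an inflation word of the letter `a` (equals the common length
when lengths are well-defined). -/
def maxLen (θ : A → Finset (List A)) (a : A) : ℕ := (θ a).sup List.length

/-- Recognisability: every `x ∈ X_ϑ` has a unique inflation-word decomposition. -/
def Recognisable (θ : A → Finset (List A)) : Prop :=
  ∀ x ∈ Xtheta θ, ∃! p : (ℤ → A) × ℕ,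
    p.1 ∈ Xtheta θ ∧ p.2 < maxLen θ (p.1 0) ∧
      (fun i => x (i - (p.2 : ℤ))) ∈ substSeq θ p.1

/-- Recognisability of the `m`-th power of a constant length-`ℓ` substitution. -/
def RecognisablePow (θ : A → Finset (List A)) (m ℓ : ℕ) : Prop :=
  ∀ x ∈ Xtheta θ, ∃! p : (ℤ → A) × ℕ,
    p.1 ∈ Xtheta θ ∧ p.2 < ℓ ^ m ∧
      (fun i => x (i - (p.2 : ℤ))) ∈ substSeqPow θ m p.1

/-- The set `ϑ^m([a])` of exact images of sequences in the cylinder `[a] ⊆ X_ϑ`. -/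
def inflCylPow (θ : A → Finset (List A)) (m : ℕ) (a : A) : Set (ℤ → A) :=
  ⋃ y ∈ {w ∈ Xtheta θ | w 0 = a}, substSeqPow θ m y

/-- `r` is a radius of local recognisability for `ϑ^m`. -/
def RecogPropPow (θ : A → Finset (List A)) (m r : ℕ) : Prop :=
  ∀ (a : A) (x : ℤ → A), x ∈ inflCylPow θ m a → ∀ y ∈ Xtheta θ,
    (∀ t : ℤ, -(r : ℤ) ≤ t → t ≤ (r : ℤ) → x t = y t) → y ∈ inflCylPow θ m a

/-- The recognisability radius `κ(ϑ^m)`. -/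
noncomputable def recogRadiusPow (θ : A → Finset (List A)) (m : ℕ) : ℕ :=
  sInf {r | RecogPropPow θ m r}

/-- The recognisability radius `κ(ϑ)`. -/
noncomputable def recogRadius (θ : A → Finset (List A)) : ℕ := recogRadiusPow θ 1

/-- The random word `ϑ_P^n(a)` is (a.s.) completely determined by `ϑ_P^{n+k}(a)`
in the Markov chain. -/
def DeterminedBy (θ : A → Finset (List A)) (P : A → List A → ℝ)
    (a : A) (n k : ℕ) : Prop :=
  ∀ v₁ v₂ w : List A, v₁ ∈ realsIter θ n [a] → v₂ ∈ realsIter θ n [a] →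
    0 < iterProb θ P n [a] v₁ * iterProb θ P k v₁ w →
      0 < iterProb θ P n [a] v₂ * iterProb θ P k v₂ w → v₁ = v₂

/-- The random words `ϑ_P^n(a)` and `ϑ_P^{n+k}(a)` are independent in the Markov chain. -/
def IndepSteps (θ : A → Finset (List A)) (P : A → List A → ℝ)
    (a : A) (n k : ℕ) : Prop :=
  ∀ v w : List A,
    iterProb θ P n [a] v * iterProb θ P k v w =
      iterProb θ P n [a] v * iterProb θ P (n + k) [a] w

/-- The substitution matrix of a marginal (deterministic) substitution. -/
def marginalM (ρ : A → List A) : Matrix A A ℝ :=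
  Matrix.of fun i j => ((ρ j).count i : ℝ)

/-- Geometric compatibility: a single positive left eigenvector with eigenvalue `λ > 1`
for all marginals. -/
def GeometricallyCompatible (θ : A → Finset (List A)) : Prop :=
  ∃ lam : ℝ, 1 < lam ∧ ∃ L : A → ℝ, (∀ a, 0 < L a) ∧
    ∀ ρ : A → List A, (∀ a, ρ a ∈ θ a) → Matrix.vecMul L (marginalM ρ) = lam • L


end RandomSubstitutionTheory

/-!
By recognisability every `x ∈ X_ϑ` is uniquely `S^k ϑ(y)` with `k < ℓ`; desubstituting `m`
times gives the unique decomposition `x = S^K ϑ^m(z)` with `K = k₀ + ℓ k₁ + ⋯ + ℓ^(m-1) k_(m-1)`.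

For the radius, let `x ∈ ϑ(z)` with `z ∈ ϑ^m([a])` and let `y ∈ X_ϑ` agree with `x` on
`[-(ℓ r + κ), ℓ r + κ]`. The radius `κ` of `ϑ` puts `y` in some `ϑ(z')`, and applied around
each `ℓ t` with `|t| ≤ r` it forces `z t = z' t`; a radius `r` for `ϑ^m` then gives
`z' ∈ ϑ^m([a])`. Hence `ℓ r + κ` is a radius for `ϑ^(m+1)`, and by induction
`(1 + ℓ + ⋯ + ℓ^(m-1)) κ = (ℓ^m - 1)/(ℓ - 1) κ` is one for `ϑ^m`.

That `κ(ϑ)` is finite at all is compactness: `ϑ([a])` and `X_ϑ \ ϑ([a])` are disjoint closed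
subsets of `A^ℤ`, the second being a finite union of shifts of the sets `ϑ([b])`.
-/

namespace RandomSubstitutionTheory

theorem eq_mul_of_apply_add_one {p : ℤ → ℤ} {c : ℤ} (h0 : p 0 = 0)
    (h : ∀ j, p (j + 1) = p j + c) (j : ℤ) : p j = c * j := by
  induction j using Int.induction_on with
  | zero => simpa using h0
  | succ k ih => rw [h, ih]; ring
  | pred k ih =>
    have := h (-k - 1)
    rw [sub_add_cancel, ih] at this
    linarith

/-- Pairs `(x, y) ∈ K × L` agreeing on ever larger windows would accumulate at a point of the
diagonal. -/
theorem exists_radius_of_disjoint {X : Type*} [TopologicalSpace X] [T2Space X]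
    {K L : Set (ℤ → X)} (hK : IsCompact K) (hL : IsCompact L) (hKL : Disjoint K L) :
    ∃ r : ℕ, ∀ x ∈ K, ∀ y ∈ L, ¬ ∀ t : ℤ, -(r : ℤ) ≤ t → t ≤ r → x t = y t := by
  by_contra! h
  set T : ℕ → Set ((ℤ → X) × (ℤ → X)) := fun r =>
    {p | ∀ t : ℤ, -(r : ℤ) ≤ t → t ≤ r → p.1 t = p.2 t}
  have hT : ∀ r, IsClosed (T r) := fun r => by
    simp only [T, Set.ofPred_forall]
    exact isClosed_iInter fun t => isClosed_iInter fun _ => isClosed_iInter fun _ =>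
      isClosed_eq (by fun_prop) (by fun_prop)
  obtain ⟨p, hp⟩ := IsCompact.nonempty_iInter_of_sequence_nonempty_isCompact_isClosed
    (fun r => K ×ˢ L ∩ T r)
    (fun r p hp => ⟨hp.1, fun t h₁ h₂ => hp.2 t (by omega) (by omega)⟩)
    (fun r => by obtain ⟨x, hx, y, hy, hxy⟩ := h r; exact ⟨(x, y), ⟨hx, hy⟩, hxy⟩)
    ((hK.prod hL).inter_right (hT 0)) (fun r => (hK.prod hL).isClosed.inter (hT r))
  simp only [Set.mem_iInter] at hp
  have hdiag : p.1 = p.2 := funext fun t => (hp t.natAbs).2 t (by omega) (by omega)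
  exact hKL.ne_of_mem (hp 0).1.1 (hp 0).1.2 hdiag

variable {A : Type*}

section Window

/-- `window` maps over `List.range n` coerced to `List ℤ`, which unfolds to a `flatMap`;
this is the form `simp` can work with. -/
theorem window_eq_map (x : ℤ → A) (m : ℤ) (n : ℕ) :
    window x m n = (List.range n).map fun t : ℕ => x (m + t) := by
  simp [window, ← List.map_eq_flatMap]

theorem length_window (x : ℤ → A) (m : ℤ) (n : ℕ) : (window x m n).length = n := by
  simp [window_eq_map]

theorem window_eq_ofFn (x : ℤ → A) (m : ℤ) (n : ℕ) :
    window x m n = List.ofFn fun i : Fin n => x (m + i) := by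
  apply List.ext_getElem <;> simp [window_eq_map]

theorem window_add (x : ℤ → A) (m : ℤ) (p q : ℕ) :
    window x m (p + q) = window x m p ++ window x (m + p) q := by
  simp [window_eq_map, List.range_add, add_assoc]

theorem window_succ (x : ℤ → A) (m : ℤ) (n : ℕ) :
    window x m (n + 1) = x m :: window x (m + 1) n := by
  rw [add_comm, window_add]
  simp [window_eq_map]

theorem window_shift (x : ℤ → A) (t m : ℤ) (n : ℕ) :
    window (fun i => x (i + t)) m n = window x (m + t) n := by
  simp [window_eq_map, add_right_comm]

theorem window_isInfix (x : ℤ → A) {m m' : ℤ} {n n' : ℕ} (h₁ : m' ≤ m)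
    (h₂ : m + n ≤ m' + n') : window x m n <:+: window x m' n' := by
  obtain ⟨d, hd⟩ : ∃ d : ℕ, m = m' + d := ⟨(m - m').toNat, by omega⟩
  obtain ⟨e, he⟩ : ∃ e : ℕ, n' = d + (n + e) := ⟨n' - (d + n), by omega⟩
  rw [he, window_add, window_add, ← hd]
  exact ⟨window x m' d, window x (m + n) e, by simp⟩

theorem isClosed_setOf_window_mem [TopologicalSpace A] [DiscreteTopology A] (m : ℤ) (n : ℕ)
    (S : Set (List A)) : IsClosed {x : ℤ → A | window x m n ∈ S} := by
  simp_rw [window_eq_ofFn]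
  exact (isClosed_discrete {f : Fin n → A | List.ofFn f ∈ S}).preimage (by fun_prop)

end Window

variable {θ : A → Finset (List A)} {ℓ : ℕ}

section SubstSeq

theorem mem_substSeq_iff (hcl : ConstantLength θ ℓ) {x y : ℤ → A} :
    x ∈ substSeq θ y ↔ ∀ j : ℤ, window x (ℓ * j) ℓ ∈ θ (y j) := by
  constructor
  · rintro ⟨v, hv, p, hp0, hps, hx⟩ j
    have hlen : ∀ j, (v j).length = ℓ := fun j => hcl.2 _ _ (hv j)
    have hp : p j = ℓ * j := eq_mul_of_apply_add_one hp0 (fun j => by rw [hps, hlen]) j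
    have hwindow : window x (ℓ * j) ℓ = v j := by
      apply List.ext_getElem (by rw [length_window, hlen])
      intro i hi hi'
      simp [window_eq_map, ← hp, hx j i hi']
    exact hwindow ▸ hv j
  · intro h
    refine ⟨fun j => window x (ℓ * j) ℓ, h, fun j => ℓ * j, by simp, fun j => ?_, fun j t ht => ?_⟩
    · rw [length_window]; ring
    · simp [window_eq_map]

theorem substSeq_shift (hcl : ConstantLength θ ℓ) {x y : ℤ → A} (h : x ∈ substSeq θ y) (t : ℤ) :
    (fun i => x (i + ℓ * t)) ∈ substSeq θ (fun i => y (i + t)) := by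
  rw [mem_substSeq_iff hcl] at h ⊢
  intro j
  rw [window_shift, ← mul_add]
  exact h (j + t)

theorem substSeqPow_one (y : ℤ → A) : substSeqPow θ 1 y = substSeq θ y := by
  simp [substSeqPow]

theorem substSeqPow_succ' (m : ℕ) (y : ℤ → A) :
    substSeqPow θ (m + 1) y = ⋃ z ∈ substSeqPow θ m y, substSeq θ z := by
  induction m generalizing y with
  | zero => simp [substSeqPow]
  | succ m ih =>
    calc substSeqPow θ (m + 2) y = ⋃ z ∈ substSeq θ y, substSeqPow θ (m + 1) z := rfl
      _ = ⋃ z ∈ substSeq θ y, ⋃ w ∈ substSeqPow θ m z, substSeq θ w := by simp_rw [ih]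
      _ = _ := by simp only [substSeqPow, Set.biUnion_iUnion]

theorem maxLen_eq (hne : ∀ a, (θ a).Nonempty) (hcl : ConstantLength θ ℓ) (a : A) :
    maxLen θ a = ℓ := by
  obtain ⟨w, hw⟩ := hne a
  exact le_antisymm (Finset.sup_le fun w hw => (hcl.2 a w hw).le)
    (hcl.2 a w hw ▸ Finset.le_sup hw)

theorem shift_mem_substSeqPow_succ_iff (hcl : ConstantLength θ ℓ) {m : ℕ} {x z : ℤ → A}
    (s q : ℤ) : (fun i => x (i - (s + ℓ * q))) ∈ substSeqPow θ (m + 1) z ↔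
      ∃ w, (fun i => x (i - s)) ∈ substSeq θ w ∧ (fun i => w (i - q)) ∈ substSeqPow θ m z := by
  rw [substSeqPow_succ']
  simp only [Set.mem_iUnion, exists_prop]
  constructor
  · rintro ⟨w, hw, hx⟩
    refine ⟨fun i => w (i + q), ?_, by simpa using hw⟩
    convert substSeq_shift hcl hx q using 2 with i
    ring_nf
  · rintro ⟨w, hx, hw⟩
    refine ⟨_, hw, ?_⟩
    convert substSeq_shift hcl hx (-q) using 2 <;> funext <;> ring_nf

theorem isClosed_setOf_mem_substSeq [TopologicalSpace A] [DiscreteTopology A]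
    (hcl : ConstantLength θ ℓ) :
    IsClosed {q : (ℤ → A) × (ℤ → A) | q.2 ∈ substSeq θ q.1} := by
  simp only [mem_substSeq_iff hcl, Set.ofPred_forall, window_eq_ofFn]
  exact isClosed_iInter fun j =>
    (isClosed_discrete {p : A × (Fin ℓ → A) | List.ofFn p.2 ∈ θ p.1}).preimage
      (f := fun q : (ℤ → A) × (ℤ → A) => (q.1 j, fun i : Fin ℓ => q.2 (ℓ * j + i))) (by fun_prop)

end SubstSeq

variable [DecidableEq A]

section Legal

theorem mem_reals_cons {a : A} {u v : List A} :
    v ∈ reals θ (a :: u) ↔ ∃ w ∈ θ a, ∃ z ∈ reals θ u, v = w ++ z := by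
  simp [reals, eq_comm]

theorem reals_nonempty (hne : ∀ a, (θ a).Nonempty) (u : List A) : (reals θ u).Nonempty := by
  induction u with
  | nil => exact ⟨[], by simp [reals]⟩
  | cons a u ih =>
    obtain ⟨w, hw⟩ := hne a
    obtain ⟨z, hz⟩ := ih
    exact ⟨w ++ z, mem_reals_cons.2 ⟨w, hw, z, hz, rfl⟩⟩

theorem append_mem_reals {u₁ u₂ v₁ v₂ : List A} (h₁ : v₁ ∈ reals θ u₁) (h₂ : v₂ ∈ reals θ u₂) :
    v₁ ++ v₂ ∈ reals θ (u₁ ++ u₂) := by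
  induction u₁ generalizing v₁ with
  | nil => simp_all [reals]
  | cons a u ih =>
    obtain ⟨w, hw, z, hz, rfl⟩ := mem_reals_cons.1 h₁
    exact mem_reals_cons.2 ⟨w, hw, z ++ v₂, ih hz, by simp⟩

theorem realsIter_succ' (n : ℕ) (u : List A) :
    realsIter θ (n + 1) u = (realsIter θ n u).biUnion (reals θ) := by
  induction n generalizing u with
  | zero => simp [realsIter]
  | succ n ih =>
    rw [realsIter, Finset.biUnion_congr rfl fun v _ => ih v, ← Finset.biUnion_biUnion]
    rfl

theorem Legal.of_isInfix {u u' : List A} (hu : Legal θ u) (h : u' <:+: u) : Legal θ u' := by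
  obtain ⟨a, k, w, hw, hinf⟩ := hu
  exact ⟨a, k, w, hw, h.trans hinf⟩

theorem Legal.of_mem_reals (hne : ∀ a, (θ a).Nonempty) {u v : List A}
    (hu : Legal θ u) (hv : v ∈ reals θ u) : Legal θ v := by
  obtain ⟨a, k, w, hw, s, t, rfl⟩ := hu
  obtain ⟨vs, hvs⟩ := reals_nonempty hne s
  obtain ⟨vt, hvt⟩ := reals_nonempty hne t
  refine ⟨a, k + 1, vs ++ v ++ vt, ?_, vs, vt, rfl⟩
  rw [realsIter_succ']
  exact Finset.mem_biUnion.2 ⟨_, hw, append_mem_reals (append_mem_reals hvs hv) hvt⟩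

theorem shift_mem_Xtheta {x : ℤ → A} (hx : x ∈ Xtheta θ) (t : ℤ) :
    (fun i => x (i + t)) ∈ Xtheta θ := by
  intro m n
  rw [window_shift]
  exact hx (m + t) n

theorem window_mem_reals (hcl : ConstantLength θ ℓ) {x y : ℤ → A} (h : x ∈ substSeq θ y)
    (j : ℤ) (N : ℕ) : window x (ℓ * j) (ℓ * N) ∈ reals θ (window y j N) := by
  rw [mem_substSeq_iff hcl] at h
  induction N generalizing j with
  | zero => simp [window, reals]
  | succ N ih =>
    rw [window_succ, mul_add_one, add_comm (ℓ * N), window_add]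
    refine mem_reals_cons.2 ⟨_, h j, _, ?_, rfl⟩
    simpa [mul_add] using ih (j + 1)

theorem mem_Xtheta_of_mem_substSeq (hne : ∀ a, (θ a).Nonempty) (hcl : ConstantLength θ ℓ)
    {x y : ℤ → A} (hy : y ∈ Xtheta θ) (hx : x ∈ substSeq θ y) : x ∈ Xtheta θ := by
  intro m n
  have hℓ : (0 : ℤ) < ℓ := by have := hcl.1; omega
  set j : ℤ := m / ℓ
  have h₁ : ℓ * j ≤ m := Int.mul_ediv_self_le hℓ.ne'
  have h₂ : m + n ≤ ℓ * j + ((ℓ * (n + 1) : ℕ) : ℤ) := by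
    have := Int.lt_mul_ediv_self_add (x := m) hℓ
    push_cast
    nlinarith
  exact ((hy j (n + 1)).of_mem_reals hne (window_mem_reals hcl hx j (n + 1))).of_isInfix
    (window_isInfix x h₁ h₂)

theorem mem_Xtheta_of_mem_substSeqPow (hne : ∀ a, (θ a).Nonempty) (hcl : ConstantLength θ ℓ)
    {m : ℕ} {x y : ℤ → A} (hy : y ∈ Xtheta θ) (hx : x ∈ substSeqPow θ m y) :
    x ∈ Xtheta θ := by
  induction m generalizing y with
  | zero => exact (Set.mem_singleton_iff.1 hx) ▸ hy
  | succ m ih =>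
    obtain ⟨z, hz, hx⟩ := Set.mem_iUnion₂.1 hx
    exact ih (mem_Xtheta_of_mem_substSeq hne hcl hy hz) hx

theorem mem_inflCylPow_iff {m : ℕ} {a : A} {x : ℤ → A} :
    x ∈ inflCylPow θ m a ↔ ∃ y ∈ Xtheta θ, y 0 = a ∧ x ∈ substSeqPow θ m y := by
  simp [inflCylPow, and_assoc]

end Legal

section Recognisability

theorem Recognisable.eq_of_shift_mem_substSeq (hrec : Recognisable θ)
    (hne : ∀ a, (θ a).Nonempty) (hcl : ConstantLength θ ℓ) {x y y' : ℤ → A} {k k' : ℕ}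
    (hx : x ∈ Xtheta θ) (hy : y ∈ Xtheta θ) (hy' : y' ∈ Xtheta θ) (hk : k < ℓ) (hk' : k' < ℓ)
    (h : (fun i => x (i - k)) ∈ substSeq θ y) (h' : (fun i => x (i - k')) ∈ substSeq θ y') :
    y = y' ∧ k = k' :=
  Prod.ext_iff.1 <| (hrec x hx).unique (y₁ := (y, k)) (y₂ := (y', k'))
    ⟨hy, by rwa [maxLen_eq hne hcl], h⟩ ⟨hy', by rwa [maxLen_eq hne hcl], h'⟩

theorem Recognisable.recognisablePow (hrec : Recognisable θ) (hne : ∀ a, (θ a).Nonempty)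
    (hcl : ConstantLength θ ℓ) (m : ℕ) : RecognisablePow θ m ℓ := by
  have hℓ : 0 < ℓ := by have := hcl.1; omega
  induction m with
  | zero =>
    intro x hx
    refine ⟨(x, 0), ⟨hx, by simp, by simp [substSeqPow]⟩, ?_⟩
    rintro ⟨y, k⟩ ⟨-, hk, hxy⟩
    obtain rfl : k = 0 := by simpa using hk
    simpa [substSeqPow, eq_comm] using hxy
  | succ m ih =>
    intro x hx
    obtain ⟨⟨y, k⟩, ⟨hy, hk, hxy⟩, -⟩ := hrec x hx
    rw [maxLen_eq hne hcl] at hk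
    obtain ⟨⟨z, q⟩, ⟨hz, hq, hyz⟩, hzuniq⟩ := ih y hy
    refine ⟨(z, k + ℓ * q), ⟨hz, ?_, ?_⟩, ?_⟩
    · calc k + ℓ * q < ℓ * (q + 1) := by linarith
        _ ≤ ℓ * ℓ ^ m := Nat.mul_le_mul_left ℓ hq
        _ = ℓ ^ (m + 1) := (pow_succ' ℓ m).symm
    · push_cast
      exact (shift_mem_substSeqPow_succ_iff hcl _ _).2 ⟨y, hxy, hyz⟩
    · rintro ⟨z', K⟩ ⟨hz', hK, hxz'⟩
      have hK' : (K : ℤ) = (K % ℓ : ℕ) + ℓ * (K / ℓ : ℕ) := by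
        exact_mod_cast (Nat.mod_add_div K ℓ).symm
      rw [hK'] at hxz'
      obtain ⟨w, hxw, hwz'⟩ := (shift_mem_substSeqPow_succ_iff hcl _ _).1 hxz'
      have hw : w ∈ Xtheta θ := by
        simpa using shift_mem_Xtheta (mem_Xtheta_of_mem_substSeqPow hne hcl hz' hwz') (K / ℓ)
      obtain ⟨rfl, rfl⟩ :=
        hrec.eq_of_shift_mem_substSeq hne hcl hx hw hy (Nat.mod_lt K hℓ) hk hxw hxy
      obtain ⟨rfl, rfl⟩ := Prod.ext_iff.1 <|
        hzuniq (z', K / ℓ) ⟨hz', (Nat.div_lt_iff_lt_mul hℓ).2 (pow_succ ℓ m ▸ hK), hwz'⟩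
      simp [Nat.mod_add_div]

theorem recogPropPow_zero : RecogPropPow θ 0 0 := by
  intro a x hx y hy hxy
  obtain ⟨x', hx', rfl, rfl⟩ := mem_inflCylPow_iff.1 hx
  exact mem_inflCylPow_iff.2 ⟨y, hy, (hxy 0 le_rfl le_rfl).symm, rfl⟩

/-- The radius `κ` puts the shift of `y` by `ℓ t` in `ϑ([z t])`, and recognisability identifies
its preimage with the shift of `z'` by `t`. -/
theorem Recognisable.apply_eq_of_agree (hrec : Recognisable θ) (hne : ∀ a, (θ a).Nonempty)
    (hcl : ConstantLength θ ℓ) {κ : ℕ} (hκ : RecogPropPow θ 1 κ) {x y z z' : ℤ → A}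
    (hz : z ∈ Xtheta θ) (hz' : z' ∈ Xtheta θ) (hx : x ∈ substSeq θ z) (hy : y ∈ substSeq θ z')
    (t : ℤ) (hxy : ∀ s : ℤ, -(κ : ℤ) ≤ s → s ≤ κ → x (s + ℓ * t) = y (s + ℓ * t)) :
    z t = z' t := by
  have hℓ : 0 < ℓ := by have := hcl.1; omega
  have hz't := shift_mem_Xtheta hz' t
  have hyt := substSeq_shift hcl hy t
  have hyc : (fun i => y (i + ℓ * t)) ∈ inflCylPow θ 1 (z t) := by
    refine hκ _ _ (mem_inflCylPow_iff.2 ⟨_, shift_mem_Xtheta hz t, by simp, ?_⟩) _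
      (mem_Xtheta_of_mem_substSeq hne hcl hz't hyt) hxy
    rw [substSeqPow_one]
    exact substSeq_shift hcl hx t
  obtain ⟨u, hu, hu0, hyu⟩ := mem_inflCylPow_iff.1 hyc
  rw [substSeqPow_one] at hyu
  have hu_eq := (hrec.eq_of_shift_mem_substSeq (k := 0) (k' := 0) hne hcl
    (mem_Xtheta_of_mem_substSeq hne hcl hz't hyt) hu hz't hℓ hℓ
    (by simpa using hyu) (by simpa using hyt)).1
  simpa [← hu0] using congrFun hu_eq 0

theorem Recognisable.recogPropPow_succ (hrec : Recognisable θ) (hne : ∀ a, (θ a).Nonempty)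
    (hcl : ConstantLength θ ℓ) {κ r m : ℕ} (hκ : RecogPropPow θ 1 κ)
    (hr : RecogPropPow θ m r) : RecogPropPow θ (m + 1) (ℓ * r + κ) := by
  intro a x hx y hy hxy
  have hℓr : (0 : ℤ) ≤ ℓ * r := by positivity
  push_cast at hxy
  obtain ⟨y₀, hy₀, rfl, hxy₀⟩ := mem_inflCylPow_iff.1 hx
  rw [substSeqPow_succ'] at hxy₀
  obtain ⟨z, hz, hxz⟩ := Set.mem_iUnion₂.1 hxy₀
  have hzX := mem_Xtheta_of_mem_substSeqPow hne hcl hy₀ hz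
  obtain ⟨z', hz', -, hyz'⟩ := mem_inflCylPow_iff.1 <|
    hκ (z 0) x (mem_inflCylPow_iff.2 ⟨z, hzX, rfl, by rwa [substSeqPow_one]⟩) y hy
      fun t h₁ h₂ => hxy t (by linarith) (by linarith)
  rw [substSeqPow_one] at hyz'
  have hzz' : ∀ t : ℤ, -(r : ℤ) ≤ t → t ≤ r → z t = z' t := fun t h₁ h₂ =>
    hrec.apply_eq_of_agree hne hcl hκ hzX hz' hxz hyz' t fun s hs₁ hs₂ =>
      hxy _ (by nlinarith) (by nlinarith)
  obtain ⟨y₁, hy₁, hy₁0, hz'y₁⟩ := mem_inflCylPow_iff.1 <|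
    hr _ z (mem_inflCylPow_iff.2 ⟨y₀, hy₀, rfl, hz⟩) z' hz' hzz'
  exact mem_inflCylPow_iff.2
    ⟨y₁, hy₁, hy₁0, by rw [substSeqPow_succ']; exact Set.mem_biUnion hz'y₁ hyz'⟩

theorem Recognisable.recogPropPow_geom_sum (hrec : Recognisable θ)
    (hne : ∀ a, (θ a).Nonempty) (hcl : ConstantLength θ ℓ) {κ : ℕ} (hκ : RecogPropPow θ 1 κ)
    (m : ℕ) : RecogPropPow θ m ((∑ i ∈ Finset.range m, ℓ ^ i) * κ) := by
  induction m with
  | zero => simpa using recogPropPow_zero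
  | succ m ih =>
    rw [geom_sum_succ, add_one_mul, mul_assoc]
    exact hrec.recogPropPow_succ hne hcl hκ ih

end Recognisability

section Topology

variable [TopologicalSpace A] [DiscreteTopology A]

theorem isClosed_Xtheta : IsClosed (Xtheta θ) := by
  simp only [Xtheta, Set.ofPred_forall]
  exact isClosed_iInter fun m => isClosed_iInter fun n =>
    isClosed_setOf_window_mem m n {u | Legal θ u}

variable [Finite A]

theorem isClosed_inflCylPow_one (hcl : ConstantLength θ ℓ) (b : A) :
    IsClosed (inflCylPow θ 1 b) := by
  have hC : IsClosed
      {q : (ℤ → A) × (ℤ → A) | q.1 ∈ Xtheta θ ∧ q.1 0 = b ∧ q.2 ∈ substSeq θ q.1} :=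
    (isClosed_Xtheta.preimage continuous_fst).inter <|
      ((isClosed_discrete {b}).preimage (by fun_prop)).inter (isClosed_setOf_mem_substSeq hcl)
  convert (hC.isCompact.image continuous_snd).isClosed
  ext x
  simp [mem_inflCylPow_iff, substSeqPow_one]

theorem isClosed_Xtheta_diff_inflCylPow_one (hrec : Recognisable θ)
    (hne : ∀ a, (θ a).Nonempty) (hcl : ConstantLength θ ℓ) (b : A) :
    IsClosed (Xtheta θ \ inflCylPow θ 1 b) := by
  have hℓ : 0 < ℓ := by have := hcl.1; omega
  have hunion : Xtheta θ \ inflCylPow θ 1 b = ⋃ p ∈ {p : A × ℕ | p.2 < ℓ ∧ p ≠ (b, 0)},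
      {z | (fun i => z (i - p.2)) ∈ inflCylPow θ 1 p.1} := by
    ext z
    simp only [Set.mem_sdiff, Set.mem_iUnion, Set.mem_ofPred_eq, exists_prop]
    constructor
    · rintro ⟨hz, hzb⟩
      obtain ⟨⟨y, k⟩, ⟨hy, hk, hzy⟩, -⟩ := hrec z hz
      refine ⟨(y 0, k), ⟨by rwa [maxLen_eq hne hcl] at hk, fun hyk => hzb ?_⟩,
        mem_inflCylPow_iff.2 ⟨y, hy, rfl, by rwa [substSeqPow_one]⟩⟩
      obtain ⟨hyb, rfl⟩ := Prod.ext_iff.1 hyk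
      exact mem_inflCylPow_iff.2 ⟨y, hy, hyb, by simpa [substSeqPow_one] using hzy⟩
    · rintro ⟨⟨c, k⟩, ⟨hk, hck⟩, hzc⟩
      obtain ⟨y, hy, rfl, hzy⟩ := mem_inflCylPow_iff.1 hzc
      rw [substSeqPow_one] at hzy
      have hz : z ∈ Xtheta θ := by
        simpa using shift_mem_Xtheta (mem_Xtheta_of_mem_substSeq hne hcl hy hzy) k
      refine ⟨hz, fun hzb => hck ?_⟩
      obtain ⟨y', hy', rfl, hzy'⟩ := mem_inflCylPow_iff.1 hzb
      rw [substSeqPow_one] at hzy'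
      obtain ⟨rfl, rfl⟩ := hrec.eq_of_shift_mem_substSeq (k' := 0) hne hcl hz hy hy' hk hℓ hzy
        (by simpa using hzy')
      rfl
  rw [hunion]
  refine Set.Finite.isClosed_biUnion ?_ fun p _ =>
    (isClosed_inflCylPow_one hcl p.1).preimage (by fun_prop)
  exact (Set.finite_univ.prod (Set.finite_Iio ℓ)).subset fun p hp => ⟨trivial, hp.1⟩

end Topology

theorem Recognisable.exists_recogPropPow_one [Finite A] (hrec : Recognisable θ)
    (hne : ∀ a, (θ a).Nonempty) (hcl : ConstantLength θ ℓ) : ∃ r, RecogPropPow θ 1 r := by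
  let : TopologicalSpace A := ⊥
  have : DiscreteTopology A := ⟨rfl⟩
  have := Fintype.ofFinite A
  choose r hr using fun a => exists_radius_of_disjoint (isClosed_inflCylPow_one hcl a).isCompact
    (isClosed_Xtheta_diff_inflCylPow_one hrec hne hcl a).isCompact Set.disjoint_sdiff_right
  refine ⟨Finset.univ.sup r, fun a x hx y hy hxy => by_contra fun hya => ?_⟩
  have hra : r a ≤ Finset.univ.sup r := Finset.le_sup (Finset.mem_univ a)
  exact hr a x hx y ⟨hy, hya⟩ fun t h₁ h₂ => hxy t (by omega) (by omega)

theorem statement16_general {A : Type*} [Fintype A] [DecidableEq A]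
    (θ : A → Finset (List A)) (P : A → List A → ℝ) (ℓ : ℕ)
    (hRS : IsRandomSubstitution θ P)
    (hcl : ConstantLength θ ℓ) (hrec : Recognisable θ) :
    ∀ m : ℕ, 1 ≤ m → RecognisablePow θ m ℓ ∧
      (recogRadiusPow θ m : ℝ) ≤
        ((ℓ : ℝ) ^ m - 1) / ((ℓ : ℝ) - 1) * (recogRadius θ : ℝ) := by
  intro m _
  have hne : ∀ a, (θ a).Nonempty := hRS.1
  refine ⟨hrec.recognisablePow hne hcl m, ?_⟩
  obtain ⟨r, hr⟩ := hrec.exists_recogPropPow_one hne hcl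
  have hκ : RecogPropPow θ 1 (recogRadius θ) := Nat.sInf_mem (s := {r | RecogPropPow θ 1 r}) ⟨r, hr⟩
  have hle : recogRadiusPow θ m ≤ (∑ i ∈ Finset.range m, ℓ ^ i) * recogRadius θ :=
    Nat.sInf_le (hrec.recogPropPow_geom_sum hne hcl hκ m)
  have hℓ : (ℓ : ℝ) ≠ 1 := by have := hcl.1; norm_cast; omega
  calc (recogRadiusPow θ m : ℝ)
      ≤ (∑ i ∈ Finset.range m, (ℓ : ℝ) ^ i) * recogRadius θ := by exact_mod_cast hle
    _ = ((ℓ : ℝ) ^ m - 1) / ((ℓ : ℝ) - 1) * recogRadius θ := by rw [geom_sum_eq hℓ]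

theorem statement16 {A : Type*} [Fintype A] [DecidableEq A]
    (θ : A → Finset (List A)) (P : A → List A → ℝ) (ℓ : ℕ)
    (hRS : IsRandomSubstitution θ P) (hprim : IsPrimitive θ P)
    (hcl : ConstantLength θ ℓ) (hrec : Recognisable θ) :
    ∀ m : ℕ, 1 ≤ m → RecognisablePow θ m ℓ ∧
      (recogRadiusPow θ m : ℝ) ≤
        ((ℓ : ℝ) ^ m - 1) / ((ℓ : ℝ) - 1) * (recogRadius θ : ℝ) :=
  statement16_general θ P ℓ hRS hcl hrec

end RandomSubstitutionTheory
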